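/- arXiv:math/0502158 — 11 statements merged into one kernel-verified Lean document; each statement's English description precedes it below -/
import Mathlib

section
/- Let n ≥ 1 and let A be the 2n×2n matrix with rational entries, whose rows and columns are indexed by pairs (i,a) with i ∈ {0,…,n−1} and a ∈ {0,1}, defined by: A((i,0),(i,1)) = −2 and A((i,1),(i,0)) = 2 for every i; A((i,0),(j,1)) = 1 and A((i,1),(j,0)) = −1 whenever |i−j| = 1; and all other entries equal to 0. Then A has nonzero determinant, i.e. A is invertible (equivalently, A has rank 2n). -/
open Kronecker

private lemma sum_ite_val {n : ℕ} (m : ℕ) (f : Fin n → ℚ) :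
    ∑ j : Fin n, (if (j : ℕ) = m then f j else 0) =
      if h : m < n then f ⟨m, h⟩ else 0 := by
  split
  · next h =>
    rw [Finset.sum_eq_single (⟨m, h⟩ : Fin n)]
    · simp
    · intro j _ hj
      rw [if_neg]
      intro hjm
      exact hj (Fin.ext hjm)
    · simp
  · next h =>
    apply Finset.sum_eq_zero
    intro j _
    rw [if_neg]
    intro hjm
    exact h (hjm ▸ j.isLt)

/-- The tridiagonal matrix with `-2` on the diagonal and `1` on the two
adjacent diagonals has nonzero determinant (its kernel is trivial). -/
private lemma tridiag_det_ne_zero (n : ℕ) :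
    (Matrix.of fun i j : Fin n =>
      if i = j then (-2 : ℚ)
      else if (i : ℕ) + 1 = j ∨ (j : ℕ) + 1 = i then 1 else 0).det ≠ 0 := by
  set T : Matrix (Fin n) (Fin n) ℚ := Matrix.of fun i j : Fin n =>
      if i = j then (-2 : ℚ)
      else if (i : ℕ) + 1 = j ∨ (j : ℕ) + 1 = i then 1 else 0 with hT
  intro hdet
  obtain ⟨v, hv0, hv⟩ := Matrix.exists_mulVec_eq_zero_iff.mpr hdet
  set u : ℕ → ℚ := fun k => if h : k < n then v ⟨k, h⟩ else 0 with hu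
  have E : ∀ k, k < n →
      (if k = 0 then 0 else u (k - 1)) + u (k + 1) = 2 * u k := by
    intro k hk
    have h0 := congrFun hv ⟨k, hk⟩
    have hterm : ∀ j : Fin n, T ⟨k, hk⟩ j * v j =
        (if (j : ℕ) = k then -2 * v j else 0) +
        ((if (j : ℕ) = k + 1 then v j else 0) +
         (if k ≠ 0 ∧ (j : ℕ) = k - 1 then v j else 0)) := by
      intro j
      simp only [hT, Matrix.of_apply, Fin.ext_iff]
      split_ifs <;> first | (exfalso; omega) | ring
    have hsum : T.mulVec v ⟨k, hk⟩ =
        -2 * u k + (u (k + 1) + (if k = 0 then 0 else u (k - 1))) := by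
      rw [Matrix.mulVec, dotProduct]
      simp only [hterm]
      rw [Finset.sum_add_distrib, Finset.sum_add_distrib]
      congr 1
      · rw [sum_ite_val k (fun j => -2 * v j), dif_pos hk]
        simp only [hu, dif_pos hk]
      congr 1
      · rw [sum_ite_val (k + 1) v]
      · by_cases hk0 : k = 0
        · subst hk0
          simp only [if_pos rfl]
          apply Finset.sum_eq_zero
          intro j _
          rw [if_neg]
          simp
        · simp only [if_neg hk0]
          have h3 : ∀ j : Fin n, (if k ≠ 0 ∧ (j : ℕ) = k - 1 then v j else 0) =
              (if (j : ℕ) = k - 1 then v j else 0) := by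
            intro j
            split_ifs <;> tauto
          simp only [h3]
          rw [sum_ite_val (k - 1) v]
    rw [h0] at hsum
    simp only [Pi.zero_apply] at hsum
    linarith [hsum]
  have C : ∀ k, k ≤ n → u k = (k + 1) * u 0 := by
    intro k
    induction k using Nat.strong_induction_on with
    | _ k ih =>
      match k with
      | 0 => intro _; push_cast; ring
      | 1 =>
        intro h1
        have e := E 0 (by omega)
        norm_num at e
        push_cast
        linarith
      | (m + 2) =>
        intro h
        have e := E (m + 1) (by omega)
        have hne : m + 1 ≠ 0 := by omega
        simp only [if_neg hne, Nat.add_sub_cancel] at e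
        have h1 := ih m (by omega) (by omega)
        have h2 := ih (m + 1) (by omega) (by omega)
        push_cast at h1 h2 ⊢
        linarith
  have hun : u n = 0 := by simp [hu]
  have h0 : u 0 = 0 := by
    have hC := C n le_rfl
    rw [hun] at hC
    have hnn : ((n : ℚ) + 1) ≠ 0 := by positivity
    have := mul_eq_zero.mp hC.symm
    tauto
  apply hv0
  funext i
  have hCi := C i (le_of_lt i.isLt)
  rw [h0, mul_zero] at hCi
  have hui : u (i : ℕ) = v i := by
    simp only [hu, dif_pos i.isLt]
  rw [← hui, hCi]
  rfl

/-- The intersection matrix of the cycles `A^i, B^i`, `i = 0, …, n-1`, supported on the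
components of an `I_n × I_0` fibre: `A((i,0),(i,1)) = -2`, `A((i,1),(i,0)) = 2`,
`A((i,0),(j,1)) = 1` and `A((i,1),(j,0)) = -1` for `|i - j| = 1`, and all other entries `0`.
This `2n × 2n` matrix has nonzero determinant. -/
theorem intersection_matrix_det_ne_zero (n : ℕ) (hn : 1 ≤ n)
    (A : Matrix (Fin n × Fin 2) (Fin n × Fin 2) ℚ)
    (hA : ∀ p q : Fin n × Fin 2, A p q =
      if p.1 = q.1 ∧ p.2 = 0 ∧ q.2 = 1 then -2
      else if p.1 = q.1 ∧ p.2 = 1 ∧ q.2 = 0 then 2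
      else if (p.1.val + 1 = q.1.val ∨ q.1.val + 1 = p.1.val) ∧ p.2 = 0 ∧ q.2 = 1 then 1
      else if (p.1.val + 1 = q.1.val ∨ q.1.val + 1 = p.1.val) ∧ p.2 = 1 ∧ q.2 = 0 then -1
      else 0) :
    A.det ≠ 0 := by
  set T : Matrix (Fin n) (Fin n) ℚ := Matrix.of fun i j : Fin n =>
      if i = j then (-2 : ℚ)
      else if (i : ℕ) + 1 = j ∨ (j : ℕ) + 1 = i then 1 else 0 with hT
  set S : Matrix (Fin 2) (Fin 2) ℚ := Matrix.of fun a b : Fin 2 =>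
      if a = 0 ∧ b = 1 then (1 : ℚ) else if a = 1 ∧ b = 0 then -1 else 0 with hS
  have hAeq : A = T ⊗ₖ S := by
    ext ⟨i, a⟩ ⟨j, b⟩
    rw [hA]
    simp only [Matrix.kroneckerMap_apply, hT, hS, Matrix.of_apply]
    fin_cases a <;> fin_cases b <;>
      simp only [Fin.mk_zero, Fin.mk_one, Fin.zero_eta] <;>
      norm_num <;>
      split_ifs <;> first | (exfalso; omega) | norm_num
  rw [hAeq, Matrix.det_kronecker]
  have hdS : S.det = 1 := by
    rw [Matrix.det_fin_two]
    norm_num [hS]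
  rw [hdS, one_pow, mul_one]
  simpa using pow_ne_zero 2 (tridiag_det_ne_zero n)
end

section
/- The rational solutions α of the equation 1296·(α² + 3)³ = 389017·(α² − 1)² are exactly α ∈ {17, −17, 5/4, −5/4, 7/9, −7/9}. -/
/-!
As a polynomial in `t = α²`, the difference of the two sides is the cubic
`(t - 17²)(16t - 5²)(81t - 7²)`, whose three roots are squares of rationals; so the sextic
splits into linear factors over `ℚ` and its roots can be read off.
-/

lemma mul_sq_sub_sq_eq_zero_iff {K : Type*} [Field K] {a b x : K} (ha : a ≠ 0) :
    (a * x) ^ 2 - b ^ 2 = 0 ↔ x = b / a ∨ x = -b / a := by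
  rw [sub_eq_zero, sq_eq_sq_iff_eq_or_eq_neg, eq_div_iff ha, eq_div_iff ha, mul_comm x a]

lemma caseB_sextic_factor (α : ℚ) :
    1296 * (α ^ 2 + 3) ^ 3 - 389017 * (α ^ 2 - 1) ^ 2 =
      ((1 * α) ^ 2 - 17 ^ 2) * ((4 * α) ^ 2 - 5 ^ 2) * ((9 * α) ^ 2 - 7 ^ 2) := by
  ring

/-- The rational solutions of `1296(α² + 3)³ = 389017(α² − 1)²` are exactly
`α ∈ {17, −17, 5/4, −5/4, 7/9, −7/9}`. -/
theorem rational_solutions_caseB (α : ℚ) :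
    1296 * (α ^ 2 + 3) ^ 3 = 389017 * (α ^ 2 - 1) ^ 2 ↔
      α = 17 ∨ α = -17 ∨ α = 5 / 4 ∨ α = -5 / 4 ∨ α = 7 / 9 ∨ α = -7 / 9 := by
  rw [← sub_eq_zero, caseB_sextic_factor, mul_eq_zero, mul_eq_zero,
    mul_sq_sub_sq_eq_zero_iff one_ne_zero, mul_sq_sub_sq_eq_zero_iff four_ne_zero,
    mul_sq_sub_sq_eq_zero_iff (by norm_num : (9 : ℚ) ≠ 0)]
  norm_num [or_assoc]
end

section
/- Let α be a rational number with α ≠ 1/2, and set λ = ((2α+1)/(2α−1))². Then 5184·(λ² − λ + 1)³ = 389017·λ²(λ − 1)² holds if and only if α ∈ {1, −1, 1/4, −1/4}. -/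
lemma sq_ne_two' (q : ℚ) : q ^ 2 ≠ 2 := by
  intro h
  have h2 : ((q : ℝ)) ^ 2 = 2 := by exact_mod_cast h
  have : Real.sqrt 2 = |(q : ℝ)| := by
    rw [← h2, Real.sqrt_sq_eq_abs]
  exact irrational_sqrt_two (this ▸ ⟨|q|, by push_cast; rfl⟩)

/-- For rational `α ≠ 1/2` and `l = ((2α+1)/(2α−1))²`,
`5184(l² − l + 1)³ = 389017 l²(l − 1)²` holds iff `α ∈ {1, −1, 1/4, −1/4}`. -/
theorem rational_solutions_third_case (α : ℚ) (hα : α ≠ 1 / 2) (l : ℚ)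
    (hl : l = ((2 * α + 1) / (2 * α - 1)) ^ 2) :
    5184 * (l ^ 2 - l + 1) ^ 3 = 389017 * l ^ 2 * (l - 1) ^ 2 ↔
      α = 1 ∨ α = -1 ∨ α = 1 / 4 ∨ α = -1 / 4 := by
  have hd : 2 * α - 1 ≠ 0 := by
    intro h; apply hα; linarith
  set r : ℚ := (2 * α + 1) / (2 * α - 1) with hr
  have hrd : r * (2 * α - 1) = 2 * α + 1 := by
    rw [hr, div_mul_cancel₀ _ hd]
  constructor
  · intro h
    have key : (l - 9) * (9 * l - 1) * (8 * l - 9) * (9 * l - 8) * (l + 8) * (8 * l + 1) = 0 := by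
      linear_combination h
    have h9 : l = r ^ 2 := hl
    rcases mul_eq_zero.mp key with key | key
    rotate_left
    · -- 8l + 1 = 0, l = r² ≥ 0, contradiction
      exfalso; nlinarith [sq_nonneg r, key, h9]
    rcases mul_eq_zero.mp key with key | key
    rotate_left
    · exfalso; nlinarith [sq_nonneg r, key, h9]
    rcases mul_eq_zero.mp key with key | key
    rotate_left
    · -- 9l - 8 = 0 → (3r/2)² = 2
      exfalso
      apply sq_ne_two' (3 * r / 2)
      have : r ^ 2 = 8 / 9 := by rw [← h9]; linarith
      field_simp
      linarith [this]
    rcases mul_eq_zero.mp key with key | key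
    rotate_left
    · -- 8l - 9 = 0 → (4r/3)² = 2
      exfalso
      apply sq_ne_two' (4 * r / 3)
      have : r ^ 2 = 9 / 8 := by rw [← h9]; linarith
      field_simp
      linarith [this]
    rcases mul_eq_zero.mp key with key | key
    · -- l = 9 → r = ±3
      have h3 : (r - 3) * (r + 3) = 0 := by
        have : r ^ 2 = 9 := by rw [← h9]; linarith
        linear_combination this
      rcases mul_eq_zero.mp h3 with h3 | h3
      · left
        have hr3 : r = 3 := by linarith
        have := hrd; rw [hr3] at this; linarith
      · right; right; left
        have hr3 : r = -3 := by linarith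
        have := hrd; rw [hr3] at this; linarith
    · -- l = 1/9 → r = ±1/3
      have h3 : (r - 1/3) * (r + 1/3) = 0 := by
        have : r ^ 2 = 1 / 9 := by rw [← h9]; linarith
        linear_combination this
      rcases mul_eq_zero.mp h3 with h3 | h3
      · right; left
        have hr3 : r = 1/3 := by linarith
        have := hrd; rw [hr3] at this; linarith
      · right; right; right
        have hr3 : r = -1/3 := by linarith
        have := hrd; rw [hr3] at this; linarith
  · intro h
    rcases h with h | h | h | h <;> subst h <;> norm_num [hr] at hl <;> subst hl <;> norm_num
end

section
/- There is no rational number α with α ≠ 1/2 and α ≠ 1 such that λ = ((2α+1)/(2α−1))²·((α+1)/(α−1)) satisfies 5184·(λ² − λ + 1)³ = 389017·λ²(λ − 1)². -/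
/-!
Write `λ = N(α, 1) / D(α, 1)` with the cubic forms `N(x, y) = (2x + y)²(x + y)` and
`D(x, y) = (2x - y)²(x - y)`, and homogenize the equation as
`J(n, d) = 5184(n² - nd + d²)³ - 389017 n²d²(n - d)² = 0`. For `α = p/q` in lowest terms,
homogeneity gives `J(N(p, q), D(p, q)) = q¹⁸ J(N(α, 1), D(α, 1)) = 0` in `ℤ`. Modulo `61` (the
smallest prime that works) this binary form of degree `18` has no zero other than `(0, 0)`, so
`61` divides both `p` and `q`.
-/

section Forms

variable {R : Type*} [CommRing R]

def jForm (n d : R) : R :=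
  5184 * (n ^ 2 - n * d + d ^ 2) ^ 3 - 389017 * n ^ 2 * d ^ 2 * (n - d) ^ 2

def lambdaNum (x y : R) : R := (2 * x + y) ^ 2 * (x + y)

def lambdaDen (x y : R) : R := (2 * x - y) ^ 2 * (x - y)

theorem jForm_mul (n d s : R) : jForm (n * s) (d * s) = s ^ 6 * jForm n d := by
  unfold jForm; ring

theorem lambdaNum_mul (x y t : R) : lambdaNum (x * t) (y * t) = lambdaNum x y * t ^ 3 := by
  unfold lambdaNum; ring

theorem lambdaDen_mul (x y t : R) : lambdaDen (x * t) (y * t) = lambdaDen x y * t ^ 3 := by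
  unfold lambdaDen; ring

theorem jForm_lambda_mul (x y t : R) :
    jForm (lambdaNum (x * t) (y * t)) (lambdaDen (x * t) (y * t)) =
      t ^ 18 * jForm (lambdaNum x y) (lambdaDen x y) := by
  rw [lambdaNum_mul, lambdaDen_mul, jForm_mul, ← pow_mul]

theorem intCast_jForm_lambda (p q : ℤ) :
    ((jForm (lambdaNum p q) (lambdaDen p q) : ℤ) : R) =
      jForm (lambdaNum (p : R) q) (lambdaDen (p : R) q) := by
  simp [jForm, lambdaNum, lambdaDen]

end Forms

section Field

variable {K : Type*} [Field K]

theorem jForm_eq_zero_iff {n d : K} (hd : d ≠ 0) :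
    jForm n d = 0 ↔
      5184 * ((n / d) ^ 2 - n / d + 1) ^ 3 = 389017 * (n / d) ^ 2 * (n / d - 1) ^ 2 := by
  have hscale : d ^ 6 * (5184 * ((n / d) ^ 2 - n / d + 1) ^ 3 -
      389017 * (n / d) ^ 2 * (n / d - 1) ^ 2) = jForm n d := by
    unfold jForm; field_simp
  rw [← hscale, mul_eq_zero_iff_left (pow_ne_zero 6 hd), sub_eq_zero]

theorem lambdaDen_ne_zero {x : K} (h2 : x ≠ 1 / 2) (h1 : x ≠ 1) : lambdaDen x 1 ≠ 0 := by
  have h2' : 2 * x - 1 ≠ 0 := by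
    contrapose! h2
    exact eq_one_div_of_mul_eq_one_right (sub_eq_zero.1 h2)
  exact mul_ne_zero (pow_ne_zero 2 h2') (sub_ne_zero.2 h1)

theorem lambda_eq_div (x : K) :
    ((2 * x + 1) / (2 * x - 1)) ^ 2 * ((x + 1) / (x - 1)) = lambdaNum x 1 / lambdaDen x 1 := by
  rw [lambdaNum, lambdaDen, div_pow, div_mul_div_comm]

end Field

set_option maxRecDepth 100000 in
theorem eq_zero_of_jForm_lambda_eq_zero_zmod61 :
    ∀ x y : ZMod 61, jForm (lambdaNum x y) (lambdaDen x y) = 0 → x = 0 ∧ y = 0 := by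
  unfold jForm lambdaNum lambdaDen
  decide

theorem Rat.jForm_lambda_num_den_eq_zero {α : ℚ} (h : jForm (lambdaNum α 1) (lambdaDen α 1) = 0) :
    jForm (lambdaNum α.num α.den) (lambdaDen α.num α.den) = 0 := by
  have hq := jForm_lambda_mul α 1 (α.den : ℚ)
  rw [one_mul, Rat.mul_den_eq_num, h, mul_zero] at hq
  rw [← Int.cast_inj (α := ℚ), intCast_jForm_lambda, Int.cast_natCast, Int.cast_zero, hq]

theorem Rat.eq_one_of_num_cast_eq_zero_of_den_cast_eq_zero (α : ℚ) {p : ℕ}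
    (hnum : (α.num : ZMod p) = 0) (hden : (α.den : ZMod p) = 0) : p = 1 := by
  rw [ZMod.intCast_zmod_eq_zero_iff_dvd] at hnum
  rw [ZMod.natCast_eq_zero_iff] at hden
  exact Nat.eq_one_of_dvd_coprimes α.reduced (Int.natCast_dvd.1 hnum) hden

/-- There is no rational `α ≠ 1/2, 1` such that `l = ((2α+1)/(2α−1))²·((α+1)/(α−1))`
satisfies `5184(l² − l + 1)³ = 389017 l²(l − 1)²`. -/
theorem no_rational_solutions_first_case :
    ¬ ∃ α : ℚ, α ≠ 1 / 2 ∧ α ≠ 1 ∧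
      (let l : ℚ := ((2 * α + 1) / (2 * α - 1)) ^ 2 * ((α + 1) / (α - 1));
        5184 * (l ^ 2 - l + 1) ^ 3 = 389017 * l ^ 2 * (l - 1) ^ 2) := by
  rintro ⟨α, hα2, hα1, h⟩
  rw [lambda_eq_div, ← jForm_eq_zero_iff (lambdaDen_ne_zero hα2 hα1)] at h
  have h61 := congrArg (Int.cast : ℤ → ZMod 61) (Rat.jForm_lambda_num_den_eq_zero h)
  rw [intCast_jForm_lambda, Int.cast_natCast, Int.cast_zero] at h61
  obtain ⟨hnum, hden⟩ := eq_zero_of_jForm_lambda_eq_zero_zmod61 _ _ h61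
  exact absurd (α.eq_one_of_num_cast_eq_zero_of_den_cast_eq_zero hnum hden) (by norm_num)
end

section
/- Let g be an invertible 2×2 matrix over ℚ such that the induced map on one-dimensional subspaces of ℚ² maps each of the three lines L(0), L(1), L(9) to a line in the set S = {L(0), L(1), L(9)}. Then there exist a nonzero rational scalar c and a matrix A in the six-element set consisting of the identity matrix together with [[81,−81],[17,−81]], [[81,−81],[73,−9]], [[9,−81],[73,−81]], [[9,0],[10,−9]], [[−1,9],[7,1]], such that g = c·A. -/
/-- If an invertible `2×2` rational matrix maps each of the lines `L(0), L(1), L(9)`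
(where `L(a)` is the span of `(a,1)`) into the set `{L(0), L(1), L(9)}`, then up to a
nonzero scalar it is one of six explicit matrices. -/
theorem fractional_linear_maps_preserving_019 (g : Matrix (Fin 2) (Fin 2) ℚ)
    (hg : g.det ≠ 0) (L : ℚ → Submodule ℚ (Fin 2 → ℚ))
    (hL : ∀ a : ℚ, L a = Submodule.span ℚ {![a, 1]})
    (h : ∀ a ∈ ({0, 1, 9} : Set ℚ),
      (L a).map g.mulVecLin ∈ ({L 0, L 1, L 9} : Set (Submodule ℚ (Fin 2 → ℚ)))) :
    ∃ c : ℚ, c ≠ 0 ∧ ∃ A ∈ ({1,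
        !![81, -81; 17, -81], !![81, -81; 73, -9], !![9, -81; 73, -81],
        !![9, 0; 10, -9], !![-1, 9; 7, 1]} : Set (Matrix (Fin 2) (Fin 2) ℚ)),
      g = c • A := by
  have key : ∀ a ∈ ({0,1,9} : Set ℚ), ∃ b ∈ ({0,1,9} : Set ℚ),
      g 0 0 * a + g 0 1 = b * (g 1 0 * a + g 1 1) := by
    intro a ha
    have hmem := h a ha
    simp only [Set.mem_insert_iff, Set.mem_singleton_iff] at hmem
    have step : ∀ b : ℚ, (L a).map g.mulVecLin = L b →
        g 0 0 * a + g 0 1 = b * (g 1 0 * a + g 1 1) := by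
      intro b heq
      have hv : g.mulVecLin ![a, 1] ∈ (L a).map g.mulVecLin :=
        Submodule.mem_map_of_mem (by rw [hL]; exact Submodule.mem_span_singleton_self _)
      rw [heq, hL, Submodule.mem_span_singleton] at hv
      obtain ⟨t, ht⟩ := hv
      have h0 := congrFun ht 0
      have h1 := congrFun ht 1
      simp [Matrix.mulVecLin_apply, Matrix.mulVec, dotProduct,
        Fin.sum_univ_two] at h0 h1
      rw [← h0, ← h1]; ring
    rcases hmem with heq | heq | heq
    · exact ⟨0, by norm_num, step 0 heq⟩
    · exact ⟨1, by norm_num, step 1 heq⟩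
    · exact ⟨9, by norm_num, step 9 heq⟩
  obtain ⟨b1, hb1, e1⟩ := key 0 (by norm_num)
  obtain ⟨b2, hb2, e2⟩ := key 1 (by norm_num)
  obtain ⟨b3, hb3, e3⟩ := key 9 (by norm_num)
  rw [Matrix.det_fin_two] at hg
  norm_num at e1 e2 e3
  simp only [Set.mem_insert_iff, Set.mem_singleton_iff] at hb1 hb2 hb3
  rcases hb1 with rfl | rfl | rfl <;> rcases hb2 with rfl | rfl | rfl <;>
    rcases hb3 with rfl | rfl | rfl
  · -- case (0,0,0)
    exact absurd (by linear_combination (g 1 1) * e2 - (g 1 1 + g 1 0) * e1) hg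
  · -- case (0,0,1)
    exact absurd (by linear_combination (g 1 1) * e2 - (g 1 1 + g 1 0) * e1) hg
  · -- case (0,0,9)
    exact absurd (by linear_combination (g 1 1) * e2 - (g 1 1 + g 1 0) * e1) hg
  · -- case (0,1,0)
    exact absurd (by linear_combination (g 1 1/9) * e3 - (g 1 1/9 + g 1 0) * e1) hg
  · -- case (0,1,1)
    exact absurd (by linear_combination (-(9 * g 1 0 + g 1 1)/8) * e2 + ((g 1 1 + g 1 0)/8) * e3) hg
  · -- case (0,1,9)
    have hq : g 0 1 = 0 := by linarith
    have hr : g 1 0 = 0 := by linarith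
    have hp : g 0 0 = g 1 1 := by linarith
    have hs : g 1 1 ≠ 0 := fun h0 => hg (by linear_combination (g 0 0 - (0) * g 1 0) * h0 - g 1 0 * hq)
    refine ⟨g 1 1, fun hc0 => hs (by linarith), 1, ?_, ?_⟩
    · exact Set.mem_insert _ _
    · ext i j
      fin_cases i <;> fin_cases j <;>
        simp only [Matrix.smul_apply, Matrix.one_apply, Matrix.cons_val', Matrix.cons_val_zero,
          Matrix.cons_val_one, Matrix.head_cons, Matrix.empty_val', Matrix.cons_val_fin_one,
          Matrix.head_fin_const, Matrix.of_apply, smul_eq_mul, Fin.isValue, Fin.zero_eta, Fin.mk_one,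
          if_true, if_false, Ne, zero_ne_one, one_ne_zero, ite_true, ite_false, reduceIte] <;>
        linarith
  · -- case (0,9,0)
    exact absurd (by linear_combination (g 1 1/9) * e3 - (g 1 1/9 + g 1 0) * e1) hg
  · -- case (0,9,1)
    have hq : g 0 1 = 0 := by linarith
    have hr : 9 * g 1 0 = -10 * g 1 1 := by linarith
    have hp : g 0 0 = -(g 1 1) := by linarith
    have hs : g 1 1 ≠ 0 := fun h0 => hg (by linear_combination (g 0 0 - (0) * g 1 0) * h0 - g 1 0 * hq)
    refine ⟨-(g 1 1)/9, fun hc0 => hs (by linarith), !![9, 0; 10, -9], ?_, ?_⟩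
    · exact Set.mem_insert_iff.mpr (Or.inr (Or.inr (Or.inr (Or.inr (Or.inl rfl)))))
    · ext i j
      fin_cases i <;> fin_cases j <;>
        simp only [Matrix.smul_apply, Matrix.one_apply, Matrix.cons_val', Matrix.cons_val_zero,
          Matrix.cons_val_one, Matrix.head_cons, Matrix.empty_val', Matrix.cons_val_fin_one,
          Matrix.head_fin_const, Matrix.of_apply, smul_eq_mul, Fin.isValue, Fin.zero_eta, Fin.mk_one,
          if_true, if_false, Ne, zero_ne_one, one_ne_zero, ite_true, ite_false, reduceIte] <;>
        linarith
  · -- case (0,9,9)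
    exact absurd (by linear_combination (-(9 * g 1 0 + g 1 1)/8) * e2 + ((g 1 1 + g 1 0)/8) * e3) hg
  · -- case (1,0,0)
    exact absurd (by linear_combination (-(9 * g 1 0 + g 1 1)/8) * e2 + ((g 1 1 + g 1 0)/8) * e3) hg
  · -- case (1,0,1)
    exact absurd (by linear_combination (g 1 1/9) * e3 - (g 1 1/9 + g 1 0) * e1) hg
  · -- case (1,0,9)
    have hq : g 0 1 = g 1 1 := by linarith
    have hr : 81 * g 1 0 = -17 * g 1 1 := by linarith
    have hp : g 0 0 = -(g 1 1) := by linarith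
    have hs : g 1 1 ≠ 0 := fun h0 => hg (by linear_combination (g 0 0 - (1) * g 1 0) * h0 - g 1 0 * hq)
    refine ⟨-(g 1 1)/81, fun hc0 => hs (by linarith), !![81, -81; 17, -81], ?_, ?_⟩
    · exact Set.mem_insert_iff.mpr (Or.inr (Or.inl rfl))
    · ext i j
      fin_cases i <;> fin_cases j <;>
        simp only [Matrix.smul_apply, Matrix.one_apply, Matrix.cons_val', Matrix.cons_val_zero,
          Matrix.cons_val_one, Matrix.head_cons, Matrix.empty_val', Matrix.cons_val_fin_one,
          Matrix.head_fin_const, Matrix.of_apply, smul_eq_mul, Fin.isValue, Fin.zero_eta, Fin.mk_one,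
          if_true, if_false, Ne, zero_ne_one, one_ne_zero, ite_true, ite_false, reduceIte] <;>
        linarith
  · -- case (1,1,0)
    exact absurd (by linear_combination (g 1 1) * e2 - (g 1 1 + g 1 0) * e1) hg
  · -- case (1,1,1)
    exact absurd (by linear_combination (g 1 1) * e2 - (g 1 1 + g 1 0) * e1) hg
  · -- case (1,1,9)
    exact absurd (by linear_combination (g 1 1) * e2 - (g 1 1 + g 1 0) * e1) hg
  · -- case (1,9,0)
    have hq : g 0 1 = g 1 1 := by linarith
    have hr : 81 * g 1 0 = -73 * g 1 1 := by linarith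
    have hp : 9 * g 0 0 = -(g 1 1) := by linarith
    have hs : g 1 1 ≠ 0 := fun h0 => hg (by linear_combination (g 0 0 - (1) * g 1 0) * h0 - g 1 0 * hq)
    refine ⟨-(g 1 1)/81, fun hc0 => hs (by linarith), !![9, -81; 73, -81], ?_, ?_⟩
    · exact Set.mem_insert_iff.mpr (Or.inr (Or.inr (Or.inr (Or.inl rfl))))
    · ext i j
      fin_cases i <;> fin_cases j <;>
        simp only [Matrix.smul_apply, Matrix.one_apply, Matrix.cons_val', Matrix.cons_val_zero,
          Matrix.cons_val_one, Matrix.head_cons, Matrix.empty_val', Matrix.cons_val_fin_one,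
          Matrix.head_fin_const, Matrix.of_apply, smul_eq_mul, Fin.isValue, Fin.zero_eta, Fin.mk_one,
          if_true, if_false, Ne, zero_ne_one, one_ne_zero, ite_true, ite_false, reduceIte] <;>
        linarith
  · -- case (1,9,1)
    exact absurd (by linear_combination (g 1 1/9) * e3 - (g 1 1/9 + g 1 0) * e1) hg
  · -- case (1,9,9)
    exact absurd (by linear_combination (-(9 * g 1 0 + g 1 1)/8) * e2 + ((g 1 1 + g 1 0)/8) * e3) hg
  · -- case (9,0,0)
    exact absurd (by linear_combination (-(9 * g 1 0 + g 1 1)/8) * e2 + ((g 1 1 + g 1 0)/8) * e3) hg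
  · -- case (9,0,1)
    have hq : g 0 1 = 9 * g 1 1 := by linarith
    have hr : 9 * g 1 0 = -73 * g 1 1 := by linarith
    have hp : g 0 0 = -9 * g 1 1 := by linarith
    have hs : g 1 1 ≠ 0 := fun h0 => hg (by linear_combination (g 0 0 - (9) * g 1 0) * h0 - g 1 0 * hq)
    refine ⟨-(g 1 1)/9, fun hc0 => hs (by linarith), !![81, -81; 73, -9], ?_, ?_⟩
    · exact Set.mem_insert_iff.mpr (Or.inr (Or.inr (Or.inl rfl)))
    · ext i j
      fin_cases i <;> fin_cases j <;>
        simp only [Matrix.smul_apply, Matrix.one_apply, Matrix.cons_val', Matrix.cons_val_zero,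
          Matrix.cons_val_one, Matrix.head_cons, Matrix.empty_val', Matrix.cons_val_fin_one,
          Matrix.head_fin_const, Matrix.of_apply, smul_eq_mul, Fin.isValue, Fin.zero_eta, Fin.mk_one,
          if_true, if_false, Ne, zero_ne_one, one_ne_zero, ite_true, ite_false, reduceIte] <;>
        linarith
  · -- case (9,0,9)
    exact absurd (by linear_combination (g 1 1/9) * e3 - (g 1 1/9 + g 1 0) * e1) hg
  · -- case (9,1,0)
    have hq : g 0 1 = 9 * g 1 1 := by linarith
    have hr : g 1 0 = 7 * g 1 1 := by linarith
    have hp : g 0 0 = -(g 1 1) := by linarith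
    have hs : g 1 1 ≠ 0 := fun h0 => hg (by linear_combination (g 0 0 - (9) * g 1 0) * h0 - g 1 0 * hq)
    refine ⟨g 1 1, fun hc0 => hs (by linarith), !![-1, 9; 7, 1], ?_, ?_⟩
    · exact Set.mem_insert_iff.mpr (Or.inr (Or.inr (Or.inr (Or.inr (Or.inr (rfl))))))
    · ext i j
      fin_cases i <;> fin_cases j <;>
        simp only [Matrix.smul_apply, Matrix.one_apply, Matrix.cons_val', Matrix.cons_val_zero,
          Matrix.cons_val_one, Matrix.head_cons, Matrix.empty_val', Matrix.cons_val_fin_one,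
          Matrix.head_fin_const, Matrix.of_apply, smul_eq_mul, Fin.isValue, Fin.zero_eta, Fin.mk_one,
          if_true, if_false, Ne, zero_ne_one, one_ne_zero, ite_true, ite_false, reduceIte] <;>
        linarith
  · -- case (9,1,1)
    exact absurd (by linear_combination (-(9 * g 1 0 + g 1 1)/8) * e2 + ((g 1 1 + g 1 0)/8) * e3) hg
  · -- case (9,1,9)
    exact absurd (by linear_combination (g 1 1/9) * e3 - (g 1 1/9 + g 1 0) * e1) hg
  · -- case (9,9,0)
    exact absurd (by linear_combination (g 1 1) * e2 - (g 1 1 + g 1 0) * e1) hg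
  · -- case (9,9,1)
    exact absurd (by linear_combination (g 1 1) * e2 - (g 1 1 + g 1 0) * e1) hg
  · -- case (9,9,9)
    exact absurd (by linear_combination (g 1 1) * e2 - (g 1 1 + g 1 0) * e1) hg
end

section
/- For t ∈ ℂ, consider the homogeneous cubic F_t(x,y,z) = (x+y+z)(xy+yz+zx) − t·xyz. There exists a point (x,y,z) ∈ ℂ³ ∖ {(0,0,0)} at which all three partial derivatives ∂F_t/∂x, ∂F_t/∂y, ∂F_t/∂z vanish if and only if t ∈ {0, 1, 9}. -/
/-!
Write `∂ₓF_t` for the partial derivative at `(x, y, z)`; the other two are its cyclic rotations.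
Since `∂ₓF_t - ∂ᵧF_t = (y - x)(x + y + z - t z)`, at a critical point with `t ≠ 0` two coordinates
coincide (otherwise `t x = t y = t z = x + y + z`). On the diagonal `x = y` the two remaining equations
read `3x² + (5 - t)xz + z² = 0` and `x (4z - (t - 5)x) = 0`, and eliminating `z` leaves
`3 (9 - t)(t - 1) x² = 0`. Conversely `(1, 1, 1)`, `(1, -1, 1)` and `(1, ω, ω²)` with `ω` a primitive
cube root of unity are critical points for `t = 9, 1, 0`.
-/

open MvPolynomial

section CommRing

variable {R : Type*} [CommRing R]

noncomputable def pencilCubic (t : R) : MvPolynomial (Fin 3) R :=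
  (X 0 + X 1 + X 2) * (X 0 * X 1 + X 1 * X 2 + X 2 * X 0) - C t * (X 0 * X 1 * X 2)

def pencilPartial (t x y z : R) : R :=
  (x + y + z) * (y + z) + (x * y + y * z + z * x) - t * (y * z)

def IsPencilCritical (t x y z : R) : Prop :=
  pencilPartial t x y z = 0 ∧ pencilPartial t y z x = 0 ∧ pencilPartial t z x y = 0

theorem eval_pderiv_pencilCubic (t : R) (p : Fin 3 → R) (i : Fin 3) :
    eval p (pderiv i (pencilCubic t)) = pencilPartial t (p i) (p (i + 1)) (p (i + 2)) := by
  fin_cases i <;>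
  · simp [pencilCubic, pencilPartial, pderiv_X]
    ring

theorem forall_eval_pderiv_pencilCubic_eq_zero_iff (t : R) (p : Fin 3 → R) :
    (∀ i, eval p (pderiv i (pencilCubic t)) = 0) ↔ IsPencilCritical t (p 0) (p 1) (p 2) := by
  simp only [eval_pderiv_pencilCubic, Fin.forall_fin_succ, IsEmpty.forall_iff, and_true]
  rfl

theorem IsPencilCritical.rotate {t x y z : R} (h : IsPencilCritical t x y z) :
    IsPencilCritical t y z x :=
  ⟨h.2.1, h.2.2, h.1⟩

theorem isPencilCritical_zero {x y z : R} (hs : x + y + z = 0) (he : x * y + y * z + z * x = 0) :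
    IsPencilCritical 0 x y z := by
  unfold IsPencilCritical pencilPartial
  exact ⟨by linear_combination (y + z) * hs + he, by linear_combination (z + x) * hs + he,
    by linear_combination (x + y) * hs + he⟩

theorem isPencilCritical_one : IsPencilCritical (1 : R) 1 (-1) 1 := by
  unfold IsPencilCritical pencilPartial
  norm_num

theorem isPencilCritical_nine : IsPencilCritical (9 : R) 1 1 1 := by
  unfold IsPencilCritical pencilPartial
  norm_num

end CommRing

section Field

variable {K : Type*} [Field K] {t x y z : K}

theorem IsPencilCritical.eq_or_eq_or_eq (h : IsPencilCritical t x y z) (ht : t ≠ 0) :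
    x = y ∨ y = z ∨ z = x := by
  obtain ⟨hx, hy, hz⟩ := h
  unfold pencilPartial at hx hy hz
  have hxy : (y - x) * (x + y + z - t * z) = 0 := by linear_combination hx - hy
  have hyz : (z - y) * (x + y + z - t * x) = 0 := by linear_combination hy - hz
  by_contra! hne
  have hsz : x + y + z = t * z := by
    linear_combination (mul_eq_zero.1 hxy).resolve_left (sub_ne_zero.2 hne.1.symm)
  have hsx : x + y + z = t * x := by
    linear_combination (mul_eq_zero.1 hyz).resolve_left (sub_ne_zero.2 hne.2.1.symm)
  exact hne.2.2 (mul_left_cancel₀ ht (hsz.symm.trans hsx))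

theorem IsPencilCritical.eq_zero_of_left_eq (h : IsPencilCritical t x x z) (h3 : (3 : K) ≠ 0)
    (ht1 : t ≠ 1) (ht9 : t ≠ 9) : x = 0 ∧ z = 0 := by
  obtain ⟨hx, -, hz⟩ := h
  unfold pencilPartial at hx hz
  have hz_of_hx (hx0 : x = 0) : z = 0 := pow_eq_zero_iff two_ne_zero |>.1 <| by
    subst hx0; linear_combination hx
  suffices x = 0 from ⟨this, hz_of_hx this⟩
  have hu : x * (4 * z - (t - 5) * x) = 0 := by linear_combination hz
  refine (mul_eq_zero.1 hu).elim id fun hu => ?_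
  have hdisc : (3 * (9 - t) * (t - 1)) * x ^ 2 = 0 := by
    linear_combination 16 * hx - (4 * z - (t - 5) * x - 2 * (t - 5) * x) * hu
  have hc : 3 * (9 - t) * (t - 1) ≠ 0 :=
    mul_ne_zero (mul_ne_zero h3 (sub_ne_zero.2 ht9.symm)) (sub_ne_zero.2 ht1)
  exact pow_eq_zero_iff two_ne_zero |>.1 ((mul_eq_zero.1 hdisc).resolve_left hc)

theorem IsPencilCritical.eq_zero (h : IsPencilCritical t x y z) (h3 : (3 : K) ≠ 0) (ht0 : t ≠ 0)
    (ht1 : t ≠ 1) (ht9 : t ≠ 9) : x = 0 ∧ y = 0 ∧ z = 0 := by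
  rcases h.eq_or_eq_or_eq ht0 with rfl | rfl | rfl
  · obtain ⟨hx, hz⟩ := h.eq_zero_of_left_eq h3 ht1 ht9
    exact ⟨hx, hx, hz⟩
  · obtain ⟨hy, hx⟩ := h.rotate.eq_zero_of_left_eq h3 ht1 ht9
    exact ⟨hx, hy, hy⟩
  · obtain ⟨hz, hy⟩ := h.rotate.rotate.eq_zero_of_left_eq h3 ht1 ht9
    exact ⟨hz, hy, hz⟩

end Field

/-- The cubic `(x+y+z)(xy+yz+zx) − t·xyz` has a nontrivial common zero of its three
partial derivatives iff `t ∈ {0, 1, 9}`. -/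
theorem singular_fibres_gamma1_6 (t : ℂ) :
    (∃ p : Fin 3 → ℂ, p ≠ 0 ∧ ∀ i : Fin 3,
        MvPolynomial.eval p (MvPolynomial.pderiv i
          ((X 0 + X 1 + X 2) * (X 0 * X 1 + X 1 * X 2 + X 2 * X 0)
            - C t * (X 0 * X 1 * X 2) : MvPolynomial (Fin 3) ℂ)) = 0) ↔
      t = 0 ∨ t = 1 ∨ t = 9 := by
  have hcrit (p : Fin 3 → ℂ) := forall_eval_pderiv_pencilCubic_eq_zero_iff t p
  unfold pencilCubic at hcrit
  simp_rw [hcrit]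
  constructor
  · rintro ⟨p, hp, hp_crit⟩
    by_contra! ht
    obtain ⟨h0, h1, h2⟩ := hp_crit.eq_zero three_ne_zero ht.1 ht.2.1 ht.2.2
    exact hp (funext fun i => by fin_cases i <;> assumption)
  · have ne_zero (a b : ℂ) : ![1, a, b] ≠ 0 := fun h => one_ne_zero (congr_fun h 0)
    rintro (rfl | rfl | rfl)
    · obtain ⟨s, hs⟩ := IsAlgClosed.exists_eq_mul_self (-3 : ℂ)
      have hω : IsPencilCritical (0 : ℂ) 1 ((s - 1) / 2) (-(s + 1) / 2) :=
        isPencilCritical_zero (by ring) (by linear_combination (1 / 4 : ℂ) * hs)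
      exact ⟨_, ne_zero _ _, hω⟩
    · exact ⟨![1, -1, 1], ne_zero _ _, isPencilCritical_one⟩
    · exact ⟨![1, 1, 1], ne_zero _ _, isPencilCritical_nine⟩
end

section
/- For t ∈ ℂ, consider the homogeneous cubic F_t(x,y,z) = x(x−z)(y−z) − t·zy(x−y). There exists a point (x,y,z) ∈ ℂ³ ∖ {(0,0,0)} at which all three partial derivatives ∂F_t/∂x, ∂F_t/∂y, ∂F_t/∂z vanish if and only if t(t² + 11t − 1) = 0, i.e. t = 0 or t = (−11 ± 5√5)/2. -/
open MvPolynomial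

/-- The cubic `x(x−z)(y−z) − t·zy(x−y)` has a nontrivial common zero of its three
partial derivatives iff `t(t² + 11t − 1) = 0`. -/
theorem singular_fibres_gamma1_5 (t : ℂ) :
    (∃ p : Fin 3 → ℂ, p ≠ 0 ∧ ∀ i : Fin 3,
        MvPolynomial.eval p (MvPolynomial.pderiv i
          (X 0 * (X 0 - X 2) * (X 1 - X 2)
            - C t * (X 2 * X 1 * (X 0 - X 1)) : MvPolynomial (Fin 3) ℂ)) = 0) ↔
      t * (t ^ 2 + 11 * t - 1) = 0 := by
  constructor
  · rintro ⟨p, hp, h⟩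
    set x := p 0 with hx
    set y := p 1 with hy
    set z := p 2 with hz
    have e0 : (2*x - z)*(y - z) - t*(z * y) = 0 := by
      have h0 := h 0
      simp [pderiv_mul, map_sub, pderiv_X, pderiv_C, Pi.single_apply] at h0
      linear_combination h0
    have e1 : x*(x - z) - t*(z*(x - 2*y)) = 0 := by
      have h1 := h 1
      simp [pderiv_mul, map_sub, pderiv_X, pderiv_C, Pi.single_apply] at h1
      linear_combination h1
    have e2 : x*(y - z) + x*(x - z) + t*(y*(x - y)) = 0 := by
      have h2 := h 2
      simp [pderiv_mul, map_sub, pderiv_X, pderiv_C, Pi.single_apply] at h2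
      linear_combination -h2
    by_contra hD
    have ht : t ≠ 0 := fun h => hD (by rw [h]; ring)
    have hq : t ^ 2 + 11 * t - 1 ≠ 0 := fun h => hD (by rw [h]; ring)
    -- certificate: t · t(t²+11t−1) · z⁴ = A·fx + B·fy + C·fz
    have hz4 : t * (t * (t^2 + 11*t - 1)) * z^4 = 0 := by
      linear_combination
        ((-1)*z^2*t^2 + (11)*z^2*t^3 + (1)*z^2*t^4 + (2/3)*y*z*t + (-5)*y*z*t^2
          + (-20/3)*y*z*t^3 + (-4)*y*z*t^4 + (-1/3)*y*z*t^5 + (-1/3)*x*z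
          + (11/3)*x*z*t + (-3)*x*z*t^2 + (-7)*x*z*t^3 + (-2/3)*x*z*t^4
          + (1/3)*x*y*t + (-7/3)*x*y*t^2 + (-11/3)*x*y*t^3 + (-1/3)*x*y*t^4) * e0
        + ((-1/3)*z^2 + (2)*z^2*t + (25/3)*z^2*t^2 + (8)*z^2*t^3 + (2/3)*z^2*t^4
          + (1/3)*y*z + (-5/3)*y*z*t + (-26/3)*y*z*t^2 + (-50/3)*y*z*t^3
          + (-5)*y*z*t^4 + (-1/3)*y*z*t^5 + (-2/3)*y^2*t + (14/3)*y^2*t^2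
          + (22/3)*y^2*t^3 + (2/3)*y^2*t^4 + (-1/3)*x*z + (4)*x*z*t
          + (-14/3)*x*z*t^2 + (-4)*x*z*t^3 + (-1/3)*x*z*t^4) * e1
        - ((-1)*z^2*t + (17/3)*z^2*t^2 + (68/3)*z^2*t^3 + (17/3)*z^2*t^4
          + (1/3)*z^2*t^5 + (4/3)*y*z*t + (-28/3)*y*z*t^2 + (-44/3)*y*z*t^3
          + (-4/3)*y*z*t^4 + (-1/3)*x*z + (4)*x*z*t + (-14/3)*x*z*t^2
          + (-4)*x*z*t^3 + (-1/3)*x*z*t^4) * e2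
    have hz0 : z = 0 := by
      have h4 : z ^ 4 = 0 := by
        have hne := mul_ne_zero ht (mul_ne_zero ht hq)
        exact (mul_eq_zero.mp hz4).resolve_left hne
      exact pow_eq_zero_iff (n := 4) (by norm_num) |>.mp h4
    have hx0 : x = 0 := by
      have : x * x = 0 := by linear_combination e1 + (t*(x - 2*y) + x)*hz0
      rcases mul_eq_zero.mp this with h' | h' <;> exact h'
    have hy0 : y = 0 := by
      have hty : t * (y * y) = 0 := by
        linear_combination -e2 + (y + x + t*y)*hx0 + (-2*x)*hz0
      rcases mul_eq_zero.mp hty with h' | h'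
      · exact absurd h' ht
      · rcases mul_eq_zero.mp h' with h'' | h'' <;> exact h''
    exact hp (funext fun i => by fin_cases i <;> assumption)
  · intro hD
    rcases mul_eq_zero.mp hD with ht | hq
    · refine ⟨![0, 1, 1], ?_, ?_⟩
      · intro h
        have := congrFun h 1
        simp at this
      · intro i
        subst ht
        fin_cases i <;>
          simp [pderiv_mul, map_sub, pderiv_X, pderiv_C, Pi.single_apply]
    · refine ⟨![(3 + t)/5, (8 + t)/5, 1], ?_, ?_⟩
      · intro h
        have := congrFun h 2
        simp at this
      · intro i
        fin_cases i
        · simp [pderiv_mul, map_sub, pderiv_X, pderiv_C, Pi.single_apply]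
          linear_combination (-3/25 : ℂ) * hq
        · simp [pderiv_mul, map_sub, pderiv_X, pderiv_C, Pi.single_apply]
          linear_combination (6/25 : ℂ) * hq
        · simp [pderiv_mul, map_sub, pderiv_X, pderiv_C, Pi.single_apply]
          linear_combination (3/25 : ℂ) * hq
end

section
/- For t ∈ ℂ, consider the homogeneous cubic F_t(x,y,z) = (x+y)(xy+z²) − 4t·xyz. There exists a point (x,y,z) ∈ ℂ³ ∖ {(0,0,0)} at which all three partial derivatives ∂F_t/∂x, ∂F_t/∂y, ∂F_t/∂z vanish if and only if t ∈ {0, 1, −1}. -/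
open MvPolynomial

/-- The cubic `(x+y)(xy+z²) − 4t·xyz` has a nontrivial common zero of its three
partial derivatives iff `t ∈ {0, 1, −1}`. -/
theorem singular_fibres_gamma0_8 (t : ℂ) :
    (∃ p : Fin 3 → ℂ, p ≠ 0 ∧ ∀ i : Fin 3,
        MvPolynomial.eval p (MvPolynomial.pderiv i
          ((X 0 + X 1) * (X 0 * X 1 + X 2 ^ 2)
            - C (4 * t) * (X 0 * X 1 * X 2) : MvPolynomial (Fin 3) ℂ)) = 0) ↔
      t = 0 ∨ t = 1 ∨ t = -1 := by
  constructor
  · rintro ⟨p, hp, h⟩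
    set x := p 0 with hx
    set y := p 1 with hy
    set z := p 2 with hz
    have h0 : 2*x*y + y^2 + z^2 - 4*t*(y*z) = 0 := by
      have := h 0
      simp [pderiv_mul, pderiv_X, Pi.single_apply] at this
      linear_combination this
    have h1 : x^2 + 2*x*y + z^2 - 4*t*(x*z) = 0 := by
      have := h 1
      simp [pderiv_mul, pderiv_X, Pi.single_apply] at this
      linear_combination this
    have h2 : 2*z*(x+y) - 4*t*(x*y) = 0 := by
      have := h 2
      simp [pderiv_mul, pderiv_X, Pi.single_apply] at this
      linear_combination this
    have hp' : x ≠ 0 ∨ y ≠ 0 ∨ z ≠ 0 := by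
      by_contra hc
      push_neg at hc
      apply hp
      funext i
      fin_cases i <;> simp [← hx, ← hy, ← hz, hc.1, hc.2.1, hc.2.2]
    rcases mul_eq_zero.mp (show (y - x) * (y + x - 4*t*z) = 0 by
        linear_combination h0 - h1) with hA | hB
    · -- y = x
      have hyx : y = x := sub_eq_zero.mp hA
      rcases eq_or_ne x 0 with hx0 | hx0
      · exfalso
        have hy0 : y = 0 := hyx.trans hx0
        have hz2 : z^2 = 0 := by
          linear_combination h0 - (2*x + y - 4*t*z)*hy0
        have hz0 : z = 0 := pow_eq_zero_iff (n := 2) (by norm_num) |>.mp hz2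
        rcases hp' with h' | h' | h' <;> [exact h' hx0; exact h' hy0; exact h' hz0]
      · have hzx : z = t * x := by
          refine mul_left_cancel₀ (show (4:ℂ)*x ≠ 0 by simp [hx0]) ?_
          linear_combination h2 + (4*t*x - 2*z)*hyx
        have ht : 3*x^2*(1 - t^2) = 0 := by
          linear_combination h0 + (-y - 3*x + 4*t*z)*hyx + (-z + 3*t*x)*hzx
        have ht2 : (t - 1) * (t + 1) = 0 := by
          rcases mul_eq_zero.mp ht with h' | h'
          · rcases mul_eq_zero.mp h' with h'' | h''
            · norm_num at h''
            · exact absurd (pow_eq_zero_iff (n := 2) (by norm_num) |>.mp h'') hx0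
          · linear_combination -h'
        rcases mul_eq_zero.mp ht2 with h' | h'
        · exact Or.inr (Or.inl (sub_eq_zero.mp h'))
        · exact Or.inr (Or.inr (by linear_combination h'))
    · rcases eq_or_ne t 0 with ht | ht
      · exact Or.inl ht
      · exfalso
        have hxy : x * y = 2 * z^2 := by
          refine mul_left_cancel₀ (show (4:ℂ)*t ≠ 0 by simp [ht]) ?_
          linear_combination (-1)*h2 + 2*z*hB
        have hz2 : z^2 = 0 := by
          have h6 : (6:ℂ) * z^2 = 0 := by
            linear_combination h0 + h1 - (x + y)*hB - 2*hxy
          linear_combination h6/6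
        have hz0 : z = 0 := pow_eq_zero_iff (n := 2) (by norm_num) |>.mp hz2
        have hxy0 : x * y = 0 := by rw [hxy, hz0]; ring
        have hsum : y + x = 0 := by linear_combination hB + 4*t*hz0
        have hx2 : x^2 = 0 := by linear_combination x*hsum - hxy0
        have hx0 : x = 0 := pow_eq_zero_iff (n := 2) (by norm_num) |>.mp hx2
        have hy0 : y = 0 := by linear_combination hsum - hx0
        rcases hp' with h' | h' | h' <;> [exact h' hx0; exact h' hy0; exact h' hz0]
  · rintro (rfl | rfl | rfl)
    · exact ⟨![-1, 1, 1], by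
        intro hc; have := congrFun hc 0; norm_num at this, by
        intro i; fin_cases i <;> simp [pderiv_mul, pderiv_X, Pi.single_apply] <;> ring⟩
    · exact ⟨![1, 1, 1], by
        intro hc; have := congrFun hc 0; norm_num at this, by
        intro i; fin_cases i <;> simp [pderiv_mul, pderiv_X, Pi.single_apply] <;> ring⟩
    · exact ⟨![1, 1, -1], by
        intro hc; have := congrFun hc 0; norm_num at this, by
        intro i; fin_cases i <;> simp [pderiv_mul, pderiv_X, Pi.single_apply] <;> ring⟩
end

section
/- For t ∈ ℂ, consider the homogeneous cubic F_t(x,y,z) = x²y + y²z + z²x − 3t·xyz. There exists a point (x,y,z) ∈ ℂ³ ∖ {(0,0,0)} at which all three partial derivatives ∂F_t/∂x, ∂F_t/∂y, ∂F_t/∂z vanish if and only if t³ = 1. -/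
open MvPolynomial

/-- The cubic `x²y + y²z + z²x − 3t·xyz` has a nontrivial common zero of its three
partial derivatives iff `t³ = 1`. -/
theorem singular_fibres_gamma0_9 (t : ℂ) :
    (∃ p : Fin 3 → ℂ, p ≠ 0 ∧ ∀ i : Fin 3,
        MvPolynomial.eval p (MvPolynomial.pderiv i
          (X 0 ^ 2 * X 1 + X 1 ^ 2 * X 2 + X 2 ^ 2 * X 0
            - C (3 * t) * (X 0 * X 1 * X 2) : MvPolynomial (Fin 3) ℂ)) = 0) ↔
      t ^ 3 = 1 := by
  constructor
  · rintro ⟨p, hp, h⟩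
    have h0 := h 0
    have h1 := h 1
    have h2 := h 2
    simp [pderiv_mul, pderiv_pow, pderiv_X, Pi.single_apply] at h0 h1 h2
    set x := p 0 with hx
    set y := p 1 with hy
    set z := p 2 with hz
    have e1 : 2 * x * y + z ^ 2 - 3 * t * (y * z) = 0 := by linear_combination h0
    have e2 : x ^ 2 + 2 * y * z - 3 * t * (x * z) = 0 := by linear_combination h1
    have e3 : y ^ 2 + 2 * z * x - 3 * t * (x * y) = 0 := by linear_combination h2
    -- all coordinates are nonzero
    have hne : x ≠ 0 ∧ y ≠ 0 ∧ z ≠ 0 := by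
      by_contra hc
      push_neg at hc
      have hall : x = 0 ∧ y = 0 ∧ z = 0 := by
        rcases Classical.em (x = 0) with hx0 | hx0
        · have hy0 : y = 0 := by
            have : y ^ 2 = 0 := by linear_combination e3 - (2 * z - 3 * t * y) * hx0
            exact pow_eq_zero_iff (by norm_num) |>.mp this
          have hz0 : z = 0 := by
            have : z ^ 2 = 0 := by
              linear_combination e1 - 2 * y * hx0 + 3 * t * z * hy0
            exact pow_eq_zero_iff (by norm_num) |>.mp this
          exact ⟨hx0, hy0, hz0⟩
        · rcases Classical.em (y = 0) with hy0 | hy0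
          · have hz0 : z = 0 := by
              have : z ^ 2 = 0 := by linear_combination e1 - (2 * x - 3 * t * z) * hy0
              exact pow_eq_zero_iff (by norm_num) |>.mp this
            have hx0 : x = 0 := by
              have : x ^ 2 = 0 := by
                linear_combination e2 - 2 * y * hz0 + 3 * t * x * hz0
              exact pow_eq_zero_iff (by norm_num) |>.mp this
            exact ⟨hx0, hy0, hz0⟩
          · have hz0 : z = 0 := hc hx0 hy0
            have hx0' : x = 0 := by
              have : x ^ 2 = 0 := by
                linear_combination e2 - (2 * y - 3 * t * x) * hz0
              exact pow_eq_zero_iff (by norm_num) |>.mp this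
            exact absurd hx0' hx0
      exact hp (funext fun i => by fin_cases i <;> simp [← hx, ← hy, ← hz, hall.1, hall.2.1, hall.2.2])
    obtain ⟨hxne, hyne, hzne⟩ := hne
    have key : 9 * (t ^ 3 - 1) * (x * y * z) ^ 2 = 0 := by
      linear_combination
        (-(x * z * (3 * t * x - 2 * y) * (3 * t * y - 2 * z)) - 4 * t * x * y ^ 2 * z
            + 2 * t ^ 2 * x ^ 2 * y * z) * e1 +
        (-(y ^ 2 * z ^ 2) - 4 * t * x * y * z ^ 2 + 2 * t ^ 2 * x * y ^ 2 * z) * e2 +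
        (-(z ^ 3 * (3 * t * x - 2 * y)) - 4 * t * x ^ 2 * y * z + 2 * t ^ 2 * x * y * z ^ 2) * e3
    have hxyz : (x * y * z) ^ 2 ≠ 0 := pow_ne_zero _ (by
      exact mul_ne_zero (mul_ne_zero hxne hyne) hzne)
    have h9 : 9 * (t ^ 3 - 1) = 0 := by
      rcases mul_eq_zero.mp key with h | h
      · exact h
      · exact absurd h hxyz
    linear_combination h9 / 9
  · intro ht
    refine ⟨![1, t, t ^ 2], ?_, ?_⟩
    · intro hcon
      have h' := congrFun hcon 0
      simp at h'
    · intro i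
      fin_cases i
      · simp [pderiv_mul, pderiv_pow, pderiv_X, Pi.single_apply]
        linear_combination (-2 * t) * ht
      · simp [pderiv_mul, pderiv_pow, pderiv_X, Pi.single_apply]
        linear_combination -ht
      · simp [pderiv_mul, pderiv_pow, pderiv_X, Pi.single_apply]
        linear_combination (0 : ℂ) * ht
end

section
/- For t ∈ ℂ, consider the homogeneous cubic F_t(x,y,z) = x(x² + z² + 2zy) − t·z(x² − y²). There exists a point (x,y,z) ∈ ℂ³ ∖ {(0,0,0)} at which all three partial derivatives ∂F_t/∂x, ∂F_t/∂y, ∂F_t/∂z vanish if and only if t ∈ {0, 1, −1}. -/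
open MvPolynomial

/-!
Writing `F = beauvilleCubic t`, the equations `∂F/∂x = ∂F/∂y = ∂F/∂z = 0` read
`3x² + z² + 2yz − 2txz = 0`, `z(x + ty) = 0` and `2x(y + z) = t(x² − y²)`.
If `z = 0` the first forces `x = 0` and the third `ty² = 0`, so `t = 0`.
If `z ≠ 0` then `x = −ty`, the third becomes `ty(2z + (1 + t²)y) = 0`, and for `t ≠ 0`
eliminating `z` from the first leaves `3(1 − t²)²y² = 0`, so `t² = 1`.
Conversely `[0 : 1 : 0]` is singular for `t = 0` and `[−t : 1 : −1]` for `t² = 1`.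
-/

def IsCriticalPoint {σ R : Type*} [CommSemiring R] (F : MvPolynomial σ R) (p : σ → R) : Prop :=
  ∀ i, eval p (pderiv i F) = 0

noncomputable def beauvilleCubic {R : Type*} [CommRing R] (t : R) : MvPolynomial (Fin 3) R :=
  X 0 * (X 0 ^ 2 + X 2 ^ 2 + 2 * X 2 * X 1) - C t * (X 2 * (X 0 ^ 2 - X 1 ^ 2))

section CommRing

variable {R : Type*} [CommRing R]

theorem isCriticalPoint_beauvilleCubic_iff (t : R) (p : Fin 3 → R) :
    IsCriticalPoint (beauvilleCubic t) p ↔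
      3 * p 0 ^ 2 + p 2 ^ 2 + 2 * p 1 * p 2 - 2 * t * p 0 * p 2 = 0 ∧
      2 * p 2 * (p 0 + t * p 1) = 0 ∧
      2 * p 0 * (p 1 + p 2) - t * (p 0 ^ 2 - p 1 ^ 2) = 0 := by
  have pderiv_two : ∀ i, pderiv i (2 : MvPolynomial (Fin 3) R) = 0 := fun i => by
    rw [← map_ofNat C 2, pderiv_C]
  simp only [IsCriticalPoint, Fin.forall_fin_succ]
  simp [beauvilleCubic, pderiv_X, Pi.single_apply, pderiv_two]
  refine and_congr ?_ (and_congr ?_ ?_) <;> ring_nf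

theorem isCriticalPoint_beauvilleCubic_zero :
    IsCriticalPoint (beauvilleCubic (0 : R)) ![0, 1, 0] := by
  simp [isCriticalPoint_beauvilleCubic_iff]

theorem isCriticalPoint_beauvilleCubic_of_sq_eq_one {t : R} (ht : t ^ 2 = 1) :
    IsCriticalPoint (beauvilleCubic t) ![-t, 1, -1] := by
  simp only [isCriticalPoint_beauvilleCubic_iff]
  norm_num [Matrix.cons_val_two]
  exact ⟨by linear_combination ht, by linear_combination t * ht⟩

end CommRing

section Field

variable {K : Type*} [Field K] [CharZero K]

theorem eq_zero_or_sq_eq_one_of_critical {t x y z : K} (hxyz : ¬(x = 0 ∧ y = 0 ∧ z = 0))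
    (e₀ : 3 * x ^ 2 + z ^ 2 + 2 * y * z - 2 * t * x * z = 0)
    (e₁ : 2 * z * (x + t * y) = 0)
    (e₂ : 2 * x * (y + z) - t * (x ^ 2 - y ^ 2) = 0) :
    t = 0 ∨ t ^ 2 = 1 := by
  by_cases hz : z = 0
  · subst hz
    have hx : x = 0 := by
      have : 3 * x ^ 2 = 0 := by linear_combination e₀
      simpa using this
    subst hx
    have hy : y ≠ 0 := fun hy => hxyz ⟨rfl, hy, rfl⟩
    have : t * y ^ 2 = 0 := by linear_combination e₂
    exact .inl (by simpa [hy] using this)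
  · have hx : x = -t * y := by
      have : x + t * y = 0 := by simpa [hz] using e₁
      linear_combination this
    subst hx
    have hy : y ≠ 0 := by
      rintro rfl
      exact hz (by simpa using e₀)
    rcases eq_or_ne t 0 with ht | ht
    · exact .inl ht
    have h2z : 2 * z = -(1 + t ^ 2) * y := by
      have : t * y * (2 * z + (1 + t ^ 2) * y) = 0 := by linear_combination -e₂
      simp only [mul_eq_zero, ht, hy, false_or] at this
      linear_combination this
    have : 3 * (1 - t ^ 2) ^ 2 * y ^ 2 = 0 := by
      linear_combination -4 * e₀ + (2 * z + 3 * (1 + t ^ 2) * y) * h2z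
    have : 1 - t ^ 2 = 0 := by simpa [hy] using this
    exact .inr (by linear_combination -this)

theorem exists_ne_zero_isCriticalPoint_beauvilleCubic_iff (t : K) :
    (∃ p : Fin 3 → K, p ≠ 0 ∧ IsCriticalPoint (beauvilleCubic t) p) ↔ t = 0 ∨ t ^ 2 = 1 := by
  constructor
  · rintro ⟨p, hp, hcrit⟩
    obtain ⟨e₀, e₁, e₂⟩ := (isCriticalPoint_beauvilleCubic_iff t p).mp hcrit
    refine eq_zero_or_sq_eq_one_of_critical (fun ⟨h₀, h₁, h₂⟩ => hp ?_) e₀ e₁ e₂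
    ext i
    fin_cases i <;> assumption
  · rintro (rfl | ht)
    · exact ⟨_, by simp, isCriticalPoint_beauvilleCubic_zero⟩
    · exact ⟨_, by simp, isCriticalPoint_beauvilleCubic_of_sq_eq_one ht⟩

end Field

/-- The cubic `x(x² + z² + 2zy) − t·z(x² − y²)` has a nontrivial common zero of its three
partial derivatives iff `t ∈ {0, 1, −1}`. -/
theorem singular_fibres_gamma1_4 (t : ℂ) :
    (∃ p : Fin 3 → ℂ, p ≠ 0 ∧ ∀ i : Fin 3,
        MvPolynomial.eval p (MvPolynomial.pderiv i
          (X 0 * (X 0 ^ 2 + X 2 ^ 2 + 2 * X 2 * X 1)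
            - C t * (X 2 * (X 0 ^ 2 - X 1 ^ 2)) : MvPolynomial (Fin 3) ℂ)) = 0) ↔
      t = 0 ∨ t = 1 ∨ t = -1 := by
  rw [← sq_eq_one_iff]
  exact exists_ne_zero_isCriticalPoint_beauvilleCubic_iff t
end

section
/- Let α be a rational number with α ∉ {0, 1, −1, 1/2, −1/2}. For t ∈ ℂ, consider the homogeneous cubic F_t(x,y,z) = (x+y+z)(xy + α²yz + α²zx) − t·xyz. Then: (i) the four complex numbers 0, 1, (1+2α)², (1−2α)² are pairwise distinct; and (ii) there exists a point (x,y,z) ∈ ℂ³ ∖ {(0,0,0)} at which all three partial derivatives ∂F_t/∂x, ∂F_t/∂y, ∂F_t/∂z vanish if and only if t ∈ {0, 1, (1+2α)², (1−2α)²}. -/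
open MvPolynomial

private lemma grad_iff_aux (a t : ℂ) (p : Fin 3 → ℂ) :
    (∀ i : Fin 3, MvPolynomial.eval p (MvPolynomial.pderiv i
            ((X 0 + X 1 + X 2)
              * (X 0 * X 1 + C a * X 1 * X 2 + C a * X 2 * X 0)
              - C t * (X 0 * X 1 * X 2) : MvPolynomial (Fin 3) ℂ)) = 0) ↔
    ((p 0 + p 1 + p 2) * (p 1 + a * p 2) + (p 0 * p 1 + a * p 1 * p 2 + a * p 2 * p 0)
        - t * (p 1 * p 2) = 0 ∧
     (p 0 + p 1 + p 2) * (p 0 + a * p 2) + (p 0 * p 1 + a * p 1 * p 2 + a * p 2 * p 0)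
        - t * (p 0 * p 2) = 0 ∧
     (p 0 + p 1 + p 2) * (a * p 0 + a * p 1) + (p 0 * p 1 + a * p 1 * p 2 + a * p 2 * p 0)
        - t * (p 0 * p 1) = 0) := by
  constructor
  · intro h
    have h0 := h 0; have h1 := h 1; have h2 := h 2
    simp [pderiv_mul, pderiv_X, Pi.single_apply] at h0 h1 h2
    exact ⟨by linear_combination h0, by linear_combination h1, by linear_combination h2⟩
  · rintro ⟨h0, h1, h2⟩ i
    fin_cases i <;> simp [pderiv_mul, pderiv_X, Pi.single_apply]
    · linear_combination h0
    · linear_combination h1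
    · linear_combination h2

/-- For rational `α ∉ {0, ±1, ±1/2}`, the points `0, 1, (1+2α)², (1−2α)²` are pairwise
distinct, and the cubic `(x+y+z)(xy + α²yz + α²zx) − t·xyz` has a nontrivial common zero
of its three partial derivatives iff `t ∈ {0, 1, (1+2α)², (1−2α)²}`. -/
theorem singular_fibres_E_alpha (α : ℚ) (h0 : α ≠ 0) (h1 : α ≠ 1) (h1' : α ≠ -1)
    (h2 : α ≠ 1 / 2) (h2' : α ≠ -1 / 2) :
    [(0 : ℂ), 1, (1 + 2 * (α : ℂ)) ^ 2, (1 - 2 * (α : ℂ)) ^ 2].Pairwise (· ≠ ·) ∧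
    ∀ t : ℂ,
      ((∃ p : Fin 3 → ℂ, p ≠ 0 ∧ ∀ i : Fin 3,
          MvPolynomial.eval p (MvPolynomial.pderiv i
            ((X 0 + X 1 + X 2)
              * (X 0 * X 1 + C ((α : ℂ) ^ 2) * X 1 * X 2 + C ((α : ℂ) ^ 2) * X 2 * X 0)
              - C t * (X 0 * X 1 * X 2) : MvPolynomial (Fin 3) ℂ)) = 0) ↔
        t = 0 ∨ t = 1 ∨ t = (1 + 2 * (α : ℂ)) ^ 2 ∨ t = (1 - 2 * (α : ℂ)) ^ 2) := by
  set A : ℂ := (α : ℂ) with hAdef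
  have hA : A ≠ 0 := by
    simp only [hAdef, ne_eq, Rat.cast_eq_zero]; exact h0
  have hP : (1 : ℂ) + 2 * A ≠ 0 := by
    have : ((1 + 2 * α : ℚ) : ℂ) ≠ 0 := by
      rw [Rat.cast_ne_zero]; intro h; apply h2'; linarith
    push_cast at this; exact this
  have hM : (1 : ℂ) - 2 * A ≠ 0 := by
    have : ((1 - 2 * α : ℚ) : ℂ) ≠ 0 := by
      rw [Rat.cast_ne_zero]; intro h; apply h2; linarith
    push_cast at this; exact this
  have hC1 : (1 : ℂ) + A ≠ 0 := by
    have : ((1 + α : ℚ) : ℂ) ≠ 0 := by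
      rw [Rat.cast_ne_zero]; intro h; apply h1'; linarith
    push_cast at this; exact this
  have hD1 : (1 : ℂ) - A ≠ 0 := by
    have : ((1 - α : ℚ) : ℂ) ≠ 0 := by
      rw [Rat.cast_ne_zero]; intro h; apply h1; linarith
    push_cast at this; exact this
  constructor
  · -- pairwise distinctness
    refine List.Pairwise.cons ?_ (List.Pairwise.cons ?_ (List.Pairwise.cons ?_
      (List.pairwise_singleton _ _)))
    · intro b hb
      simp only [List.mem_cons, List.mem_singleton, List.not_mem_nil, or_false] at hb
      rcases hb with rfl | rfl | rfl
      · norm_num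
      · exact fun h => pow_ne_zero 2 hP h.symm
      · exact fun h => pow_ne_zero 2 hM h.symm
    · intro b hb
      simp only [List.mem_cons, List.mem_singleton, List.not_mem_nil, or_false] at hb
      rcases hb with rfl | rfl
      · intro h
        have h4 : 4 * A * (1 + A) = 0 := by linear_combination -h
        rcases mul_eq_zero.mp h4 with h5 | h5
        · exact hA (by linear_combination h5 / 4)
        · exact hC1 h5
      · intro h
        have h4 : 4 * A * (A - 1) = 0 := by linear_combination -h
        rcases mul_eq_zero.mp h4 with h5 | h5
        · exact hA (by linear_combination h5 / 4)
        · exact hD1 (by linear_combination -h5)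
    · intro b hb
      simp only [List.mem_singleton] at hb
      subst hb
      intro h
      have h4 : 8 * A = 0 := by linear_combination h
      exact hA (by
        have : (8 : ℂ) ≠ 0 := by norm_num
        exact (mul_eq_zero.mp h4).resolve_left this)
  · intro t
    rw [show (∃ p : Fin 3 → ℂ, p ≠ 0 ∧ ∀ i : Fin 3,
          MvPolynomial.eval p (MvPolynomial.pderiv i
            ((X 0 + X 1 + X 2)
              * (X 0 * X 1 + C (A ^ 2) * X 1 * X 2 + C (A ^ 2) * X 2 * X 0)
              - C t * (X 0 * X 1 * X 2) : MvPolynomial (Fin 3) ℂ)) = 0) ↔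
        (∃ p : Fin 3 → ℂ, p ≠ 0 ∧
          ((p 0 + p 1 + p 2) * (p 1 + A ^ 2 * p 2)
              + (p 0 * p 1 + A ^ 2 * p 1 * p 2 + A ^ 2 * p 2 * p 0) - t * (p 1 * p 2) = 0 ∧
           (p 0 + p 1 + p 2) * (p 0 + A ^ 2 * p 2)
              + (p 0 * p 1 + A ^ 2 * p 1 * p 2 + A ^ 2 * p 2 * p 0) - t * (p 0 * p 2) = 0 ∧
           (p 0 + p 1 + p 2) * (A ^ 2 * p 0 + A ^ 2 * p 1)
              + (p 0 * p 1 + A ^ 2 * p 1 * p 2 + A ^ 2 * p 2 * p 0) - t * (p 0 * p 1) = 0))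
      from exists_congr fun p => and_congr_right fun _ => grad_iff_aux (A ^ 2) t p]
    constructor
    · rintro ⟨p, hp, e0, e1, e2⟩
      have key : (p 1 - p 0) * (p 0 + p 1 + p 2 - t * p 2) = 0 := by
        linear_combination e0 - e1
      rcases mul_eq_zero.mp key with hxy | hs
      · -- case p 1 = p 0
        have hy : p 1 = p 0 := by linear_combination hxy
        rw [hy] at e0 e1 e2
        have hx : p 0 ≠ 0 := by
          intro hx0
          rw [hx0] at e0
          have hz2 : A ^ 2 * p 2 ^ 2 = 0 := by linear_combination e0
          have hz : p 2 = 0 := by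
            have := mul_eq_zero.mp hz2
            rcases this with h' | h'
            · exact absurd h' (pow_ne_zero 2 hA)
            · exact (pow_eq_zero_iff two_ne_zero).mp h'
          apply hp
          funext i
          fin_cases i <;> simp [hx0, hy, hz]
        have key2 : 3 * p 0 * (p 0 ^ 2 - A ^ 2 * p 2 ^ 2) = 0 := by
          linear_combination p 0 * e0 - p 2 * e2
        have h3x : (3 : ℂ) * p 0 ≠ 0 := mul_ne_zero (by norm_num) hx
        have hfac : (p 0 - A * p 2) * (p 0 + A * p 2) = 0 := by
          have := (mul_eq_zero.mp key2).resolve_left h3x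
          linear_combination this
        have hz : p 2 ≠ 0 := by
          intro hz0
          rcases mul_eq_zero.mp hfac with h' | h' <;>
            · rw [hz0] at h'; apply hx; linear_combination h'
        rcases mul_eq_zero.mp hfac with h' | h'
        · -- p 0 = A * p 2, t = (1+2A)^2
          have hx' : p 0 = A * p 2 := by linear_combination h'
          rw [hx'] at e2
          have : A ^ 2 * p 2 ^ 2 * ((1 + 2 * A) ^ 2 - t) = 0 := by linear_combination e2
          have h6 : (1 + 2 * A) ^ 2 - t = 0 := by
            rcases mul_eq_zero.mp this with h'' | h''
            · exact absurd h'' (mul_ne_zero (pow_ne_zero 2 hA) (pow_ne_zero 2 hz))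
            · exact h''
          exact Or.inr (Or.inr (Or.inl (by linear_combination -h6)))
        · -- p 0 = -A * p 2, t = (1-2A)^2
          have hx' : p 0 = -(A * p 2) := by linear_combination h'
          rw [hx'] at e2
          have : A ^ 2 * p 2 ^ 2 * ((1 - 2 * A) ^ 2 - t) = 0 := by linear_combination e2
          have h6 : (1 - 2 * A) ^ 2 - t = 0 := by
            rcases mul_eq_zero.mp this with h'' | h''
            · exact absurd h'' (mul_ne_zero (pow_ne_zero 2 hA) (pow_ne_zero 2 hz))
            · exact h''
          exact Or.inr (Or.inr (Or.inr (by linear_combination -h6)))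
      · -- case p 0 + p 1 + p 2 = t * p 2
        have hz : p 2 ≠ 0 := by
          intro hz0
          rw [hz0] at e0 e1 e2 hs
          have hsum : p 0 + p 1 = 0 := by linear_combination hs
          have hprod : p 0 * p 1 = 0 := by linear_combination e0 - p 1 * hs
          have hx0 : p 0 = 0 := by
            rcases mul_eq_zero.mp hprod with h' | h'
            · exact h'
            · linear_combination hsum - h'
          have hy0 : p 1 = 0 := by linear_combination hsum - hx0
          apply hp
          funext i
          fin_cases i <;> simp [hx0, hy0, hz0]
        have eq1 : p 0 * p 1 + A ^ 2 * (2 * t - 1) * p 2 ^ 2 = 0 := by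
          linear_combination e0 - (p 1 + 2 * A ^ 2 * p 2) * hs
        have eq2 : (t - 1) * (A ^ 2 * (t + 1) * p 2 ^ 2 - p 0 * p 1) = 0 := by
          linear_combination e2 - (A ^ 2 * (p 0 + p 1) + A ^ 2 * t * p 2 + A ^ 2 * p 2) * hs
        rcases mul_eq_zero.mp eq2 with h' | h'
        · exact Or.inr (Or.inl (by linear_combination h'))
        · have h3 : 3 * (A ^ 2 * p 2 ^ 2) * t = 0 := by linear_combination eq1 + h'
          have : t = 0 := by
            rcases mul_eq_zero.mp h3 with h'' | h''
            · exact absurd h'' (mul_ne_zero (by norm_num)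
                (mul_ne_zero (pow_ne_zero 2 hA) (pow_ne_zero 2 hz)))
            · exact h''
          exact Or.inl this
    · rintro (rfl | rfl | rfl | rfl)
      · -- t = 0
        obtain ⟨w, hw⟩ := IsAlgClosed.exists_pow_nat_eq (1 - 4 * A ^ 2) (n := 2) (by norm_num)
        refine ⟨![(-1 + w) / 2, (-1 - w) / 2, 1], ?_, ?_, ?_, ?_⟩
        · intro h
          have := congrFun h 2
          simp at this
        · show ((-1 + w) / 2 + (-1 - w) / 2 + 1) * ((-1 - w) / 2 + A ^ 2 * 1)
              + ((-1 + w) / 2 * ((-1 - w) / 2) + A ^ 2 * ((-1 - w) / 2) * 1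
                + A ^ 2 * 1 * ((-1 + w) / 2)) - 0 * ((-1 - w) / 2 * 1) = 0
          linear_combination (-1 / 4 : ℂ) * hw
        · show ((-1 + w) / 2 + (-1 - w) / 2 + 1) * ((-1 + w) / 2 + A ^ 2 * 1)
              + ((-1 + w) / 2 * ((-1 - w) / 2) + A ^ 2 * ((-1 - w) / 2) * 1
                + A ^ 2 * 1 * ((-1 + w) / 2)) - 0 * ((-1 + w) / 2 * 1) = 0
          linear_combination (-1 / 4 : ℂ) * hw
        · show ((-1 + w) / 2 + (-1 - w) / 2 + 1) * (A ^ 2 * ((-1 + w) / 2) + A ^ 2 * ((-1 - w) / 2))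
              + ((-1 + w) / 2 * ((-1 - w) / 2) + A ^ 2 * ((-1 - w) / 2) * 1
                + A ^ 2 * 1 * ((-1 + w) / 2)) - 0 * ((-1 + w) / 2 * ((-1 - w) / 2)) = 0
          linear_combination (-1 / 4 : ℂ) * hw
      · -- t = 1
        refine ⟨![A, -A, 1], ?_, ?_, ?_, ?_⟩
        · intro h
          have := congrFun h 2
          simp at this
        · show (A + -A + 1) * (-A + A ^ 2 * 1) + (A * -A + A ^ 2 * -A * 1 + A ^ 2 * 1 * A)
              - 1 * (-A * 1) = 0
          ring
        · show (A + -A + 1) * (A + A ^ 2 * 1) + (A * -A + A ^ 2 * -A * 1 + A ^ 2 * 1 * A)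
              - 1 * (A * 1) = 0
          ring
        · show (A + -A + 1) * (A ^ 2 * A + A ^ 2 * -A) + (A * -A + A ^ 2 * -A * 1 + A ^ 2 * 1 * A)
              - 1 * (A * -A) = 0
          ring
      · -- t = (1+2A)^2
        refine ⟨![A, A, 1], ?_, ?_, ?_, ?_⟩
        · intro h
          have := congrFun h 2
          simp at this
        · show (A + A + 1) * (A + A ^ 2 * 1) + (A * A + A ^ 2 * A * 1 + A ^ 2 * 1 * A)
              - (1 + 2 * A) ^ 2 * (A * 1) = 0
          ring
        · show (A + A + 1) * (A + A ^ 2 * 1) + (A * A + A ^ 2 * A * 1 + A ^ 2 * 1 * A)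
              - (1 + 2 * A) ^ 2 * (A * 1) = 0
          ring
        · show (A + A + 1) * (A ^ 2 * A + A ^ 2 * A) + (A * A + A ^ 2 * A * 1 + A ^ 2 * 1 * A)
              - (1 + 2 * A) ^ 2 * (A * A) = 0
          ring
      · -- t = (1-2A)^2
        refine ⟨![A, A, -1], ?_, ?_, ?_, ?_⟩
        · intro h
          have := congrFun h 2
          simp at this
        · show (A + A + -1) * (A + A ^ 2 * -1) + (A * A + A ^ 2 * A * -1 + A ^ 2 * -1 * A)
              - (1 - 2 * A) ^ 2 * (A * -1) = 0
          ring
        · show (A + A + -1) * (A + A ^ 2 * -1) + (A * A + A ^ 2 * A * -1 + A ^ 2 * -1 * A)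
              - (1 - 2 * A) ^ 2 * (A * -1) = 0
          ring
        · show (A + A + -1) * (A ^ 2 * A + A ^ 2 * A) + (A * A + A ^ 2 * A * -1 + A ^ 2 * -1 * A)
              - (1 - 2 * A) ^ 2 * (A * A) = 0
          ring
end
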